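/- If G is a graph with γ_g'(G) = 3, then for every edge e of G, γ_g'(G−e) ≤ 4. -/

import Mathlib

open Classical

noncomputable section

namespace DomGame

variable {V : Type*} [Fintype V]

/-- Closed neighborhood of `v` as a `Finset`. -/
noncomputable def N (G : SimpleGraph V) (v : V) : Finset V :=
  Finset.univ.filter (fun u => G.Adj v u ∨ u = v)

/-- Legal moves given the set `S` of already dominated vertices. -/
noncomputable def moves (G : SimpleGraph V) (S : Finset V) : Finset V :=
  Finset.univ.filter (fun v => ¬ N G v ⊆ S)

lemma card_lt {G : SimpleGraph V} {S : Finset V} (v : V) (hv : v ∈ moves G S) :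
    (Finset.univ \ (S ∪ N G v)).card < (Finset.univ \ S).card := by
  simp only [moves, Finset.mem_filter] at hv
  obtain ⟨u, hu, hus⟩ := Finset.not_subset.mp hv.2
  apply Finset.card_lt_card
  refine ⟨Finset.sdiff_subset_sdiff (le_refl _) Finset.subset_union_left, ?_⟩
  intro hsub
  have := hsub (Finset.mem_sdiff.mpr ⟨Finset.mem_univ u, hus⟩)
  rw [Finset.mem_sdiff, Finset.mem_union] at this
  exact this.2 (Or.inr hu)

mutual
/-- Number of moves with optimal play when it is Dominator's turn and
`S` is the set of already dominated vertices. -/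
noncomputable def gameD (G : SimpleGraph V) (S : Finset V) : ℕ :=
  if h : (moves G S).Nonempty then
    1 + (moves G S).attach.inf' (by simpa using h)
      (fun v => gameS G (S ∪ N G v.1))
  else 0
termination_by (Finset.univ \ S).card
decreasing_by exact card_lt v.1 v.2

/-- Number of moves with optimal play when it is Staller's turn. -/
noncomputable def gameS (G : SimpleGraph V) (S : Finset V) : ℕ :=
  if h : (moves G S).Nonempty then
    1 + (moves G S).attach.sup' (by simpa using h)
      (fun v => gameD G (S ∪ N G v.1))
  else 0
termination_by (Finset.univ \ S).card
decreasing_by exact card_lt v.1 v.2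
end

/-- The (Dominator-start) game domination number. -/
noncomputable def gammaG (G : SimpleGraph V) : ℕ := gameD G ∅

/-- The Staller-start game domination number. -/
noncomputable def gammaG' (G : SimpleGraph V) : ℕ := gameS G ∅

end DomGame

/-!
Deleting the edge `e` only loses dominations along `e`, so whatever a sequence of moves dominates
in `G` is dominated in `G - e` too, except possibly one endpoint of `e` whose other endpoint is
dominated (`AlmostCovers`). A single missing vertex costs Dominator one extra move, and once both
endpoints of `e` are dominated every move dominates the same new vertices in both graphs. Since `γ_g'(G) ≤ 3`, after Staller's first
move `v` Dominator has a reply `w` in `G` after which every Staller move ends the game. In `G - e`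
he plays `w` again if it is still legal; otherwise `w` is an endpoint of `e` that is already
dominated, and he plays the other endpoint, which covers everything `w` covered in `G`.
-/

namespace DomGame

open Finset

variable {V : Type*}

section Game

variable [Fintype V] {G : SimpleGraph V} {S : Finset V}

lemma mem_N {v u : V} : u ∈ N G v ↔ G.Adj v u ∨ u = v := by simp [N]

lemma mem_N_self (G : SimpleGraph V) (v : V) : v ∈ N G v := mem_N.2 (Or.inr rfl)

lemma mem_moves {v : V} : v ∈ moves G S ↔ ¬ N G v ⊆ S := by simp [moves]

lemma moves_nonempty_iff : (moves G S).Nonempty ↔ S ≠ univ := by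
  constructor
  · rintro ⟨v, hv⟩ rfl
    exact mem_moves.1 hv (subset_univ _)
  · intro hS
    obtain ⟨a, ha⟩ : ∃ a, a ∉ S := by simpa [eq_univ_iff_forall] using hS
    exact ⟨a, mem_moves.2 fun h => ha (h (mem_N_self G a))⟩

lemma gameS_univ : gameS G univ = 0 := by
  rw [gameS, dif_neg (by simp [moves_nonempty_iff])]

lemma gameD_eq_zero_iff : gameD G S = 0 ↔ S = univ := by
  rw [gameD]
  split_ifs with h
  · simp [moves_nonempty_iff.1 h]
  · simpa [moves_nonempty_iff] using h

lemma gameS_le_succ_iff {n : ℕ} :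
    gameS G S ≤ n + 1 ↔ ∀ u, ¬ N G u ⊆ S → gameD G (S ∪ N G u) ≤ n := by
  rw [gameS]
  split_ifs with h
  · simp [add_comm 1, Finset.sup'_le_iff, mem_moves]
  · simp only [not_nonempty_iff_eq_empty] at h
    simp [← mem_moves, h]

lemma gameD_le_succ_iff {n : ℕ} :
    gameD G S ≤ n + 1 ↔ S = univ ∨ ∃ w, ¬ N G w ⊆ S ∧ gameS G (S ∪ N G w) ≤ n := by
  rw [gameD]
  split_ifs with h
  · simp [add_comm 1, Finset.inf'_le_iff, mem_moves, moves_nonempty_iff.1 h]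
  · simp [show S = univ by simpa [moves_nonempty_iff] using h]

lemma gameS_le_one_iff : gameS G S ≤ 1 ↔ ∀ u, ¬ N G u ⊆ S → S ∪ N G u = univ := by
  simp only [gameS_le_succ_iff (n := 0), Nat.le_zero, gameD_eq_zero_iff]

lemma gameD_le_one_of_union_eq_univ (t : V) (h : S ∪ N G t = univ) : gameD G S ≤ 1 := by
  refine gameD_le_succ_iff.2 (or_iff_not_imp_left.2 fun hS => ⟨t, fun ht => hS ?_, ?_⟩)
  · rwa [union_eq_left.2 ht] at h
  · rw [h, gameS_univ]

lemma gameD_le_one_of_gameS_le_one (h : gameS G S ≤ 1) : gameD G S ≤ 1 := by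
  by_cases hS : S = univ
  · simp [gameD_eq_zero_iff.2 hS]
  obtain ⟨a, ha⟩ := moves_nonempty_iff.2 hS
  exact gameD_le_one_of_union_eq_univ a (gameS_le_one_iff.1 h a (mem_moves.1 ha))

end Game

def AlmostCovers (e : Sym2 V) (T' T : Finset V) : Prop :=
  ∀ a ∈ T, a ∉ T' → ∃ b ∈ T', s(a, b) = e

namespace AlmostCovers

variable {e : Sym2 V} {A A' B B' : Finset V}

lemma of_subset (h : B ⊆ A) : AlmostCovers e A B :=
  fun _ ha haA => absurd (h ha) haA

lemma mono (h : AlmostCovers e A B) (hA : A ⊆ A') (hB : B' ⊆ B) : AlmostCovers e A' B' := by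
  intro a ha haA
  obtain ⟨b, hb, hab⟩ := h a (hB ha) fun h' => haA (hA h')
  exact ⟨b, hA hb, hab⟩

lemma union (h : AlmostCovers e A B) (h' : AlmostCovers e A' B') :
    AlmostCovers e (A ∪ A') (B ∪ B') := by
  intro a ha haA
  rw [mem_union, not_or] at haA
  rcases mem_union.1 ha with ha | ha
  · obtain ⟨b, hb, hab⟩ := h a ha haA.1
    exact ⟨b, mem_union_left _ hb, hab⟩
  · obtain ⟨b, hb, hab⟩ := h' a ha haA.2
    exact ⟨b, mem_union_right _ hb, hab⟩

lemma subset (h : AlmostCovers e A B) (he : ∀ a ∈ e, a ∈ A) : B ⊆ A := by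
  intro a ha
  by_contra haA
  obtain ⟨b, -, rfl⟩ := h a ha haA
  exact haA (he a (Sym2.mem_mk_left a b))

end AlmostCovers

section DeleteEdge

variable [Fintype V] {G : SimpleGraph V} {e : Sym2 V} {T T' : Finset V}

-- At most one vertex is undominated, and Dominator plays it.
lemma AlmostCovers.gameD_le_one (h : AlmostCovers e T' univ) : gameD G T' ≤ 1 := by
  by_cases hT' : T' = univ
  · simp [gameD_eq_zero_iff.2 hT']
  obtain ⟨a, ha⟩ : ∃ a, a ∉ T' := by simpa [eq_univ_iff_forall] using hT'
  obtain ⟨b, hb, hab⟩ := h a (mem_univ a) ha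
  refine gameD_le_one_of_union_eq_univ a (eq_univ_of_forall fun c => ?_)
  by_cases hc : c ∈ T'
  · exact mem_union_left _ hc
  obtain ⟨d, -, hcd⟩ := h c (mem_univ c) hc
  rcases Sym2.eq_iff.1 (hcd.trans hab.symm) with ⟨rfl, -⟩ | ⟨rfl, -⟩
  · exact mem_union_right _ (mem_N_self G c)
  · exact absurd hb hc

lemma N_deleteEdges_subset (v : V) : N (G.deleteEdges {e}) v ⊆ N G v := by
  intro a
  simp only [mem_N, SimpleGraph.deleteEdges_adj]
  tauto

lemma almostCovers_N_deleteEdges (v : V) : AlmostCovers e (N (G.deleteEdges {e}) v) (N G v) := by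
  intro a ha ha'
  refine ⟨v, mem_N_self _ v, ?_⟩
  simp only [mem_N, SimpleGraph.deleteEdges_adj, Set.mem_singleton_iff] at ha ha'
  rw [Sym2.eq_swap]
  tauto

lemma gameS_deleteEdges_le_one (hT : T ⊆ T') (he : ∀ a ∈ e, a ∈ T') (h : gameS G T ≤ 1) :
    gameS (G.deleteEdges {e}) T' ≤ 1 := by
  rw [gameS_le_one_iff] at h ⊢
  intro u hu
  have hGu : ¬ N G u ⊆ T := fun h' => hu ((N_deleteEdges_subset u).trans (h'.trans hT))
  have hcov : AlmostCovers e (T' ∪ N (G.deleteEdges {e}) u) (T ∪ N G u) :=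
    (AlmostCovers.of_subset hT).union (almostCovers_N_deleteEdges u)
  rw [← univ_subset_iff, ← h u hGu]
  exact hcov.subset fun a ha => mem_union_left _ (he a ha)

lemma gameS_deleteEdges_le_two (hT : AlmostCovers e T' T) (h : gameS G T ≤ 1) :
    gameS (G.deleteEdges {e}) T' ≤ 2 := by
  refine gameS_le_succ_iff.2 fun u hu => ?_
  by_cases hGu : N G u ⊆ T
  · -- `u` is legal only because `T'` misses an endpoint of `e`; `u` dominates it.
    obtain ⟨z, hz, hzT'⟩ := not_subset.1 hu
    obtain ⟨b, hb, hzb⟩ := hT z (hGu (N_deleteEdges_subset u hz)) hzT'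
    have hends : ∀ a ∈ e, a ∈ T' ∪ N (G.deleteEdges {e}) u := fun a ha => by
      rcases Sym2.mem_iff.1 (hzb ▸ ha) with rfl | rfl
      exacts [mem_union_right _ hz, mem_union_left _ hb]
    exact gameD_le_one_of_gameS_le_one
      (gameS_deleteEdges_le_one ((hT.mono subset_union_left le_rfl).subset hends) hends h)
  · refine AlmostCovers.gameD_le_one (e := e) ?_
    rw [← gameS_le_one_iff.1 h u hGu]
    exact hT.union (almostCovers_N_deleteEdges u)

lemma gameD_deleteEdges_le_three (hT' : T' ⊆ T) (hT : AlmostCovers e T' T) (h : gameD G T ≤ 2) :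
    gameD (G.deleteEdges {e}) T' ≤ 3 := by
  rcases gameD_le_succ_iff.1 h with rfl | ⟨w, hw, hwT⟩
  · exact hT.gameD_le_one.trans (by norm_num)
  have hcov : AlmostCovers e (T' ∪ N (G.deleteEdges {e}) w) (T ∪ N G w) :=
    hT.union (almostCovers_N_deleteEdges w)
  refine gameD_le_succ_iff.2 (Or.inr ?_)
  by_cases hw' : N (G.deleteEdges {e}) w ⊆ T'
  · -- `w` is now illegal, so it was an endpoint of `e`; Dominator plays the other endpoint.
    rw [union_eq_left.2 hw'] at hcov
    obtain ⟨z, hz, hzT⟩ := not_subset.1 hw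
    have hzT' : z ∉ T' := fun h' => hzT (hT' h')
    obtain ⟨b, hb, hzb⟩ := hcov z (mem_union_right _ hz) hzT'
    have hends : ∀ a ∈ e, a ∈ T' ∪ N (G.deleteEdges {e}) z := fun a ha => by
      rcases Sym2.mem_iff.1 (hzb ▸ ha) with rfl | rfl
      exacts [mem_union_right _ (mem_N_self _ a), mem_union_left _ hb]
    refine ⟨z, fun h' => hzT' (h' (mem_N_self _ z)), ?_⟩
    exact (gameS_deleteEdges_le_one ((hcov.mono subset_union_left le_rfl).subset hends) hends
      hwT).trans (by norm_num)
  · exact ⟨w, hw', gameS_deleteEdges_le_two hcov hwT⟩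

end DeleteEdge

end DomGame

open DomGame in
/-- If `γ_g'(G) = 3`, then `γ_g'(G−e) ≤ 4` for every edge `e`. -/
theorem gameS_three_edge_removal {V : Type*} [Fintype V] (G : SimpleGraph V)
    (hG : gammaG' G = 3) (e : Sym2 V) (he : e ∈ G.edgeSet) :
    gammaG' (G.deleteEdges {e}) ≤ 4 := by
  have hreply : ∀ v, gameD G (N G v) ≤ 2 := fun v => by
    simpa using gameS_le_succ_iff.1 hG.le v
      (Finset.not_subset.2 ⟨v, mem_N_self G v, Finset.notMem_empty v⟩)
  refine gameS_le_succ_iff.2 fun v _ => ?_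
  rw [Finset.empty_union]
  exact gameD_deleteEdges_le_three (N_deleteEdges_subset v) (almostCovers_N_deleteEdges v)
    (hreply v)
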